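/- arXiv:1708.08620 — 3 statements merged into one kernel-verified Lean document; each statement's English description precedes it below -/
import Mathlib

section
/- There is a numerical constant c > 0 with the following property. Let X be a centered real random variable and K_n > 0. If Var( e^{θX/2} ) ≤ (θ²/4) · K_n · E[ e^{θX} ] for every 0 < θ < 1/(2√K_n), then P( X ≥ t√K_n ) ≤ 3 e^{−c t} for every t ≥ 0. -/
/-!
Write `L` for the moment generating function of `X`. Since `Var(e^{sX/2}) = L(s) - L(s/2)²`, the
hypothesis reads `L(s) (1 - s²K/4) ≤ L(s/2)²`; taking logarithms, `g(s) = log L(s) - K s²`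
satisfies `g(s) ≤ 2 g(s/2)`, hence `g(θ) ≤ 2ⁿ g(θ/2ⁿ)`. As `g(s) ≤ L(s) - 1 = o(s)` for `s → 0⁺`
(the right derivative of `L` at `0` is `E X = 0`), `g(θ) ≤ 0`. At `θ = 1/(4√K)` this gives
`E e^{θX} ≤ e^{1/16} ≤ 3`, and the Chernoff bound yields `P(X ≥ t√K) ≤ 3 e^{-t/4}`.
-/

open MeasureTheory ProbabilityTheory Filter Topology Set Real

lemma neg_log_one_sub_le_two_mul {a : ℝ} (ha₀ : 0 ≤ a) (ha : a ≤ 1 / 2) :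
    -log (1 - a) ≤ 2 * a := by
  have h := one_sub_inv_le_log_of_pos (x := 1 - a) (by linarith)
  have h' : (1 - a)⁻¹ ≤ 1 + 2 * a := by
    rw [inv_le_iff_one_le_mul₀ (by linarith)]
    nlinarith
  linarith

lemma exp_mul_sub_one_div_le {s θ : ℝ} (hs : 0 < s) (hsθ : s ≤ θ) (x : ℝ) :
    (exp (s * x) - 1) / s ≤ (exp (θ * x) - 1) / θ := by
  have hθ : 0 < θ := hs.trans_le hsθ
  have hconv := convexOn_exp.2 (mem_univ (θ * x)) (mem_univ 0) (div_nonneg hs.le hθ.le)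
    (sub_nonneg.2 <| (div_le_one hθ).2 hsθ) (add_sub_cancel _ _)
  have hsx : (s / θ) • (θ * x) + (1 - s / θ) • (0 : ℝ) = s * x := by
    simp only [smul_eq_mul, mul_zero, add_zero]; field_simp
  rw [hsx, smul_eq_mul, smul_eq_mul, exp_zero] at hconv
  rw [div_le_div_iff₀ hs hθ]
  have := mul_le_mul_of_nonneg_left hconv hθ.le
  field_simp at this
  nlinarith

lemma abs_exp_mul_sub_one_div_le {s θ : ℝ} (hs : 0 < s) (hsθ : s ≤ θ) (x : ℝ) :
    |(exp (s * x) - 1) / s| ≤ |(exp (θ * x) - 1) / θ| + |x| := by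
  have hlow : x ≤ (exp (s * x) - 1) / s := by
    rw [le_div_iff₀ hs]; linarith [add_one_le_exp (s * x)]
  have hup := exp_mul_sub_one_div_le hs hsθ x
  rw [abs_le]
  constructor <;> linarith [neg_abs_le x, le_abs_self ((exp (θ * x) - 1) / θ), abs_nonneg x,
    abs_nonneg ((exp (θ * x) - 1) / θ)]

lemma tendsto_exp_mul_sub_one_div_nhdsGT (x : ℝ) :
    Tendsto (fun s => (exp (s * x) - 1) / s) (𝓝[>] 0) (𝓝 x) := by
  have hderiv : HasDerivAt (fun s => exp (s * x)) x 0 := by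
    simpa using ((hasDerivAt_id (0 : ℝ)).mul_const x).exp
  refine ((hasDerivAt_iff_tendsto_slope.1 hderiv).mono_left
    (nhdsWithin_mono _ fun s hs => ne_of_gt hs)).congr fun s => ?_
  simp [slope_def_field]

lemma nonpos_of_le_two_mul_half {g u : ℝ → ℝ} {θ : ℝ} (hθ : 0 < θ)
    (hg : ∀ s ∈ Ioc 0 θ, g s ≤ 2 * g (s / 2)) (hgu : ∀ s ∈ Ioc 0 θ, g s ≤ u s)
    (hu : Tendsto (fun s => u s / s) (𝓝[>] 0) (𝓝 0)) :
    g θ ≤ 0 := by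
  have hmem : ∀ n : ℕ, θ / 2 ^ n ∈ Ioc 0 θ := fun n =>
    ⟨by positivity, div_le_self hθ.le (one_le_pow₀ one_le_two)⟩
  have hiter : ∀ n : ℕ, g θ ≤ 2 ^ n * g (θ / 2 ^ n) := by
    intro n
    induction n with
    | zero => simp
    | succ n ih =>
      calc g θ ≤ 2 ^ n * g (θ / 2 ^ n) := ih
        _ ≤ 2 ^ n * (2 * g (θ / 2 ^ n / 2)) := by gcongr; exact hg _ (hmem n)
        _ = 2 ^ (n + 1) * g (θ / 2 ^ (n + 1)) := by rw [pow_succ, div_div]; ring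
  have hscale : Tendsto (fun n : ℕ => θ / 2 ^ n) atTop (𝓝[>] 0) :=
    tendsto_nhdsWithin_of_tendsto_nhds_of_eventually_within _
      (tendsto_const_nhds.div_atTop (tendsto_pow_atTop_atTop_of_one_lt one_lt_two))
      (Eventually.of_forall fun n => (hmem n).1)
  have hlim : Tendsto (fun n : ℕ => θ * (u (θ / 2 ^ n) / (θ / 2 ^ n))) atTop (𝓝 0) := by
    simpa using (hu.comp hscale).const_mul θ
  refine ge_of_tendsto' hlim fun n => (hiter n).trans ?_
  calc 2 ^ n * g (θ / 2 ^ n) ≤ 2 ^ n * u (θ / 2 ^ n) := by gcongr; exact hgu _ (hmem n)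
    _ = θ * (u (θ / 2 ^ n) / (θ / 2 ^ n)) := by field_simp

namespace ProbabilityTheory

variable {Ω : Type*} {m : MeasurableSpace Ω} {P : Measure Ω} [IsProbabilityMeasure P] {X : Ω → ℝ}

lemma variance_exp_mul_div_two (hX : AEMeasurable X P) {s : ℝ}
    (hs : Integrable (fun ω => exp (s * X ω)) P) :
    variance (fun ω => exp (s * X ω / 2)) P = mgf X P s - mgf X P (s / 2) ^ 2 := by
  have hsq : ∀ ω, exp (s * X ω / 2) ^ 2 = exp (s * X ω) := fun ω => by
    rw [← exp_nat_mul]; ring_nf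
  have hmeas : AEStronglyMeasurable (fun ω => exp (s * X ω / 2)) P :=
    (measurable_exp.comp_aemeasurable ((hX.const_mul s).div_const 2)).aestronglyMeasurable
  rw [variance_eq_sub ((memLp_two_iff_integrable_sq hmeas).2 (by simpa only [hsq] using hs))]
  simp only [Pi.pow_apply, hsq, mgf]
  simp only [mul_div_right_comm]

lemma tendsto_mgf_sub_one_div_nhdsGT (hX : Integrable X P) {θ : ℝ} (hθ : 0 < θ)
    (hθX : Integrable (fun ω => exp (θ * X ω)) P) :
    Tendsto (fun s => (mgf X P s - 1) / s) (𝓝[>] 0) (𝓝 P[X]) := by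
  have hint : ∀ s ∈ Ioc 0 θ, Integrable (fun ω => exp (s * X ω)) P := fun s hs =>
    integrable_exp_mul_of_le_of_le (by simp) hθX hs.1.le hs.2
  have hmem : ∀ᶠ s in 𝓝[>] (0 : ℝ), s ∈ Ioc 0 θ := Ioc_mem_nhdsGT hθ
  refine (tendsto_integral_filter_of_dominated_convergence
    (F := fun s ω => (exp (s * X ω) - 1) / s)
    (fun ω => |(exp (θ * X ω) - 1) / θ| + |X ω|) ?_ ?_ ?_ ?_).congr' ?_
  · exact Eventually.of_forall fun s => ((measurable_exp.comp_aemeasurable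
      (hX.aemeasurable.const_mul s)).sub_const 1 |>.div_const s).aestronglyMeasurable
  · filter_upwards [hmem] with s hs
    exact ae_of_all _ fun ω => abs_exp_mul_sub_one_div_le hs.1 hs.2 _
  · exact ((hθX.sub (integrable_const 1)).div_const θ).abs.add hX.abs
  · exact ae_of_all _ fun ω => tendsto_exp_mul_sub_one_div_nhdsGT (X ω)
  · filter_upwards [hmem] with s hs
    rw [integral_div, integral_sub (hint s hs) (integrable_const 1)]
    simp [mgf]

lemma log_mgf_le_two_mul_log_mgf_half (hX : AEMeasurable X P) {K s : ℝ} (hK : 0 ≤ K)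
    (hsK : s ^ 2 * K ≤ 2) (hs : Integrable (fun ω => exp (s * X ω)) P)
    (hvar : variance (fun ω => exp (s * X ω / 2)) P ≤ s ^ 2 / 4 * K * mgf X P s) :
    log (mgf X P s) ≤ 2 * log (mgf X P (s / 2)) + K * s ^ 2 / 2 := by
  have hpos := mgf_pos hs
  have ha : 0 ≤ s ^ 2 * K / 4 := by positivity
  have hmul : mgf X P s * (1 - s ^ 2 * K / 4) ≤ mgf X P (s / 2) ^ 2 := by
    rw [variance_exp_mul_div_two hX hs] at hvar
    linarith
  have hlog := log_le_log (by nlinarith) hmul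
  rw [log_mul hpos.ne' (by linarith), log_pow] at hlog
  have := neg_log_one_sub_le_two_mul ha (by linarith)
  push_cast at hlog
  linarith

lemma log_mgf_le_mul_sq (hX : Integrable X P) (hmean : P[X] = 0) {K θ : ℝ} (hK : 0 ≤ K)
    (hθ : 0 < θ) (hθK : θ ^ 2 * K ≤ 2)
    (hint : ∀ s ∈ Ioc 0 θ, Integrable (fun ω => exp (s * X ω)) P)
    (hvar : ∀ s ∈ Ioc 0 θ,
      variance (fun ω => exp (s * X ω / 2)) P ≤ s ^ 2 / 4 * K * mgf X P s) :
    log (mgf X P θ) ≤ K * θ ^ 2 := by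
  suffices h : log (mgf X P θ) - K * θ ^ 2 ≤ 0 by linarith
  refine nonpos_of_le_two_mul_half (g := fun s => log (mgf X P s) - K * s ^ 2)
    (u := fun s => mgf X P s - 1) hθ (fun s hs => ?_)
    (fun s hs => ?_) (hmean ▸ tendsto_mgf_sub_one_div_nhdsGT hX hθ (hint θ ⟨hθ, le_rfl⟩))
  · have hsK : s ^ 2 * K ≤ 2 :=
      le_trans (by gcongr; exacts [hs.1.le, hs.2]) hθK
    have := log_mgf_le_two_mul_log_mgf_half hX.aemeasurable hK hsK (hint s hs) (hvar s hs)
    linarith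
  · have := log_le_sub_one_of_pos (mgf_pos (hint s hs))
    nlinarith

end ProbabilityTheory

/-- Lemma 2.1: an exponential-moment variance bound implies an exponential
deviation inequality. -/
theorem stmt_6 :
    ∃ c : ℝ, 0 < c ∧
      ∀ (Ω : Type) (_ : MeasurableSpace Ω) (P : Measure Ω), IsProbabilityMeasure P →
      ∀ (X : Ω → ℝ), Measurable X → Integrable X P → (∫ ω, X ω ∂P) = 0 →
      ∀ (Kn : ℝ), 0 < Kn →
      (∀ θ : ℝ, 0 < θ → θ < 1 / (2 * Real.sqrt Kn) →
        Integrable (fun ω => Real.exp (θ * X ω)) P) →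
      (∀ θ : ℝ, 0 < θ → θ < 1 / (2 * Real.sqrt Kn) →
        variance (fun ω => Real.exp (θ * X ω / 2)) P ≤
          θ ^ 2 / 4 * Kn * ∫ ω, Real.exp (θ * X ω) ∂P) →
      ∀ t : ℝ, 0 ≤ t →
      P {ω | X ω ≥ t * Real.sqrt Kn} ≤ ENNReal.ofReal (3 * Real.exp (-c * t)) := by
  refine ⟨1 / 4, by norm_num, fun Ω _ P _ X _ hX hmean K hK hint hvar t _ => ?_⟩
  have hsqrt : 0 < √K := sqrt_pos.2 hK
  set θ := 1 / (4 * √K) with hθdef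
  have hθ : 0 < θ := by positivity
  have hθlt : θ < 1 / (2 * √K) := by rw [hθdef]; gcongr; norm_num
  have hθK : θ ^ 2 * K = 1 / 16 := by
    rw [hθdef, div_pow, mul_pow, sq_sqrt hK.le]
    field_simp
    norm_num
  have hIoc : ∀ s ∈ Ioc 0 θ, s < 1 / (2 * √K) := fun s hs => hs.2.trans_lt hθlt
  have hlog := log_mgf_le_mul_sq hX hmean hK.le hθ (by linarith)
    (fun s hs => hint s hs.1 (hIoc s hs)) (fun s hs => hvar s hs.1 (hIoc s hs))
  have hmgf : mgf X P θ ≤ 3 :=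
    calc mgf X P θ = exp (log (mgf X P θ)) := (exp_log (mgf_pos (hint θ hθ hθlt))).symm
      _ ≤ exp 1 := exp_le_exp.2 (by linarith)
      _ ≤ 3 := exp_one_lt_d9.le.trans (by norm_num)
  have hchernoff := measure_ge_le_exp_mul_mgf (t * √K) hθ.le (hint θ hθ hθlt)
  have hexp : -θ * (t * √K) = -(1 / 4) * t := by rw [hθdef]; field_simp
  rw [hexp] at hchernoff
  rw [← ofReal_measureReal]
  refine ENNReal.ofReal_le_ofReal (hchernoff.trans ?_)
  rw [mul_comm 3]
  gcongr
end

section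
/- (Harris' negative association inequality.) Let X₁,…,Xₙ be independent real random variables and X = (X₁,…,Xₙ). Let f : ℝⁿ → ℝ be nondecreasing in each coordinate (the others being fixed) and g : ℝⁿ → ℝ be nonincreasing in each coordinate, with f(X), g(X) and f(X)g(X) integrable. Then E[ f(X) g(X) ] ≤ E[ f(X) ] · E[ g(X) ]. -/
/-!
Independence makes the law of `X` the product of its marginals, so it suffices to show that two
bounded monotone functions on `ℝⁿ` are positively correlated under a product of probability
measures (apply this to `f` and `-g`). This goes by induction on `n` and Fubini: integrating out
the last `n` coordinates leaves two monotone functions of the first one, and in one variable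
`(F x - F y) (G x - G y) ≥ 0` integrates to Chebyshev's inequality. Unbounded `f`, `g` are
clipped to `[-k, k]`, and `k → ∞` by dominated convergence.

Monotone functions on `ℝⁿ` need not be Borel, so the Fubini steps need an a.e.-measurability
argument. In each coordinate, a monotone function agrees with its supremum over the rationals
and the atoms below the given point, except at countably many non-atoms.
-/

open MeasureTheory ProbabilityTheory Set Filter Topology

/-- The supremum of `h` over `D ∩ Iic t`, padded with `-C` so that it is a supremum over the fixed
index set `D`; for countable `D` this makes it measurable in `t` and in any parameter of `h`. -/
noncomputable def lowerEnv (C : ℝ) (D : Set ℝ) (h : ℝ → ℝ) (t : ℝ) : ℝ :=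
  ⨆ d : D, if (d : ℝ) ≤ t then h d else -C

noncomputable def upperEnv (C : ℝ) (D : Set ℝ) (h : ℝ → ℝ) (t : ℝ) : ℝ :=
  ⨅ d : D, if t ≤ (d : ℝ) then h d else C

section Envelopes

variable {C : ℝ} {D : Set ℝ} {h : ℝ → ℝ}

lemma le_lowerEnv (hC : ∀ t, |h t| ≤ C) {d t : ℝ} (hd : d ∈ D) (hdt : d ≤ t) :
    h d ≤ lowerEnv C D h t := by
  refine le_trans ?_ (le_ciSup ⟨C, ?_⟩ ⟨d, hd⟩)
  · simp [hdt]
  · rintro _ ⟨e, rfl⟩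
    dsimp only
    split_ifs
    exacts [(abs_le.1 (hC e)).2, by linarith [abs_nonneg (h 0), hC 0]]

lemma upperEnv_le (hC : ∀ t, |h t| ≤ C) {d t : ℝ} (hd : d ∈ D) (htd : t ≤ d) :
    upperEnv C D h t ≤ h d := by
  refine le_trans (ciInf_le ⟨-C, ?_⟩ ⟨d, hd⟩) ?_
  · rintro _ ⟨e, rfl⟩
    dsimp only
    split_ifs
    exacts [(abs_le.1 (hC e)).1, by linarith [abs_nonneg (h 0), hC 0]]
  · simp [htd]

lemma upperEnv_le_lowerEnv_of_lt (hC : ∀ t, |h t| ≤ C) (hD : range ((↑) : ℚ → ℝ) ⊆ D)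
    {t t' : ℝ} (htt' : t < t') : upperEnv C D h t ≤ lowerEnv C D h t' := by
  obtain ⟨q, htq, hqt'⟩ := exists_rat_btwn htt'
  exact (upperEnv_le hC (hD ⟨q, rfl⟩) htq.le).trans (le_lowerEnv hC (hD ⟨q, rfl⟩) hqt'.le)

/-- The open intervals `(lowerEnv t, upperEnv t)` are pairwise disjoint, so only countably many
are nonempty. -/
lemma countable_lowerEnv_lt_upperEnv (hC : ∀ t, |h t| ≤ C) (hD : range ((↑) : ℚ → ℝ) ⊆ D) :
    {t | lowerEnv C D h t < upperEnv C D h t}.Countable := by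
  set S := {t | lowerEnv C D h t < upperEnv C D h t}
  choose! q hq using fun t (ht : t ∈ S) =>
    exists_rat_btwn (show lowerEnv C D h t < upperEnv C D h t from ht)
  have hlt : ∀ t ∈ S, ∀ t' ∈ S, t < t' → q t < q t' := fun t ht t' ht' htt' => by
    exact_mod_cast (hq t ht).2.trans
      ((upperEnv_le_lowerEnv_of_lt hC hD htt').trans_lt (hq t' ht').1)
  refine (mapsTo_univ q S).countable_of_injOn (fun t ht t' ht' hqq => ?_) countable_univ
  by_contra hne
  rcases lt_or_gt_of_ne hne with h' | h'
  exacts [(hlt t ht t' ht' h').ne hqq, (hlt t' ht' t ht h').ne hqq.symm]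

variable [Nonempty D]

lemma lowerEnv_le (hh : Monotone h) (hC : ∀ t, |h t| ≤ C) (t : ℝ) : lowerEnv C D h t ≤ h t :=
  ciSup_le fun d => by
    split_ifs with hdt
    exacts [hh hdt, (abs_le.1 (hC t)).1]

lemma le_upperEnv (hh : Monotone h) (hC : ∀ t, |h t| ≤ C) (t : ℝ) : h t ≤ upperEnv C D h t :=
  le_ciInf fun d => by
    split_ifs with htd
    exacts [hh htd, (abs_le.1 (hC t)).2]

end Envelopes

lemma countable_range_ratCast_union_atoms (μ : Measure ℝ) [SFinite μ] :
    (range ((↑) : ℚ → ℝ) ∪ {t | 0 < μ {t}}).Countable :=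
  (countable_range _).union <| Measure.countable_meas_pos_of_disjoint_iUnion
    (fun t => measurableSet_singleton t) fun _ _ hst => disjoint_singleton.2 hst

/-- `f` agrees a.e. with its lower envelope `L` along the rationals and the atoms of `μ`, built from
measurable versions of the sections `f (d, ·)`: for `ν`-a.e. `y`, the envelopes `L (·, y)` and
`U (·, y)` differ only at countably many `t`, none of them an atom. -/
theorem aemeasurable_prod_of_monotone_fst {Y : Type*} [MeasurableSpace Y] {μ : Measure ℝ}
    [SFinite μ] {ν : Measure Y} [SFinite ν] {f : ℝ × Y → ℝ} {C : ℝ} (hC : ∀ p, |f p| ≤ C)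
    (hmono : ∀ y, Monotone fun t => f (t, y))
    (hsec : ∀ t, AEMeasurable (fun y => f (t, y)) ν) :
    AEMeasurable f (μ.prod ν) := by
  set D := range ((↑) : ℚ → ℝ) ∪ {t | 0 < μ {t}}
  have hQD : range ((↑) : ℚ → ℝ) ⊆ D := subset_union_left
  have : Countable D := (countable_range_ratCast_union_atoms μ).to_subtype
  have : Nonempty D := ⟨⟨0, hQD ⟨0, Rat.cast_zero⟩⟩⟩
  set φ : ℝ → Y → ℝ := fun t => (hsec t).mk
  have hgood : ∀ᵐ y ∂ν, ∀ d : D, φ d y = f (d, y) :=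
    ae_all_iff.2 fun d => (hsec d).ae_eq_mk.symm
  set L : ℝ × Y → ℝ := fun p => lowerEnv C D (fun t => φ t p.2) p.1
  set U : ℝ × Y → ℝ := fun p => upperEnv C D (fun t => φ t p.2) p.1
  have hL : Measurable L := Measurable.iSup fun d =>
    Measurable.ite (measurableSet_le measurable_const measurable_fst)
      ((hsec d).measurable_mk.comp measurable_snd) measurable_const
  have hU : Measurable U := Measurable.iInf fun d =>
    Measurable.ite (measurableSet_le measurable_fst measurable_const)
      ((hsec d).measurable_mk.comp measurable_snd) measurable_const
  have hLU : ∀ y, (∀ d : D, φ d y = f (d, y)) → ∀ t,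
      L (t, y) = lowerEnv C D (fun t => f (t, y)) t ∧
        U (t, y) = upperEnv C D (fun t => f (t, y)) t := fun y hy t => by
    simp only [L, U, lowerEnv, upperEnv, hy, and_self]
  have hnull : (μ.prod ν) {p | L p < U p} = 0 := by
    rw [Measure.prod_apply_symm (measurableSet_lt hL hU), lintegral_eq_zero_iff
      (measurable_measure_prodMk_right (measurableSet_lt hL hU))]
    filter_upwards [hgood] with y hy
    have hfy : ∀ t, |f (t, y)| ≤ C := fun t => hC _
    set S := {t | lowerEnv C D (fun t => f (t, y)) t < upperEnv C D (fun t => f (t, y)) t}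
    have hS : (fun t => (t, y)) ⁻¹' {p | L p < U p} = S := by
      ext t; simp only [mem_preimage, mem_ofPred_eq, (hLU y hy t).1, (hLU y hy t).2, S]
    have hatom : ∀ t ∈ S, μ {t} = 0 := fun t ht => by
      by_contra hne
      have htD : t ∈ D := Or.inr (pos_iff_ne_zero.2 hne)
      exact (not_lt.2 ((upperEnv_le hfy htD le_rfl).trans (le_lowerEnv hfy htD le_rfl))) ht
    rw [Pi.zero_apply, hS, ← biUnion_of_singleton S]
    exact (measure_biUnion_null_iff (countable_lowerEnv_lt_upperEnv hfy hQD)).2 hatom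
  refine ⟨L, hL, ?_⟩
  filter_upwards [Measure.quasiMeasurePreserving_snd.ae hgood,
    measure_eq_zero_iff_ae_notMem.1 hnull] with ⟨t, y⟩ hy htU
  have hfy : ∀ t, |f (t, y)| ≤ C := fun t => hC _
  rw [not_lt, (hLU y hy t).1, (hLU y hy t).2] at htU
  rw [(hLU y hy t).1]
  exact le_antisymm ((le_upperEnv (hmono y) hfy t).trans htU) (lowerEnv_le (hmono y) hfy t)

def consMeasurableEquiv (n : ℕ) : ℝ × (Fin n → ℝ) ≃ᵐ (Fin (n + 1) → ℝ) :=
  (MeasurableEquiv.piFinSuccAbove (fun _ => ℝ) 0).symm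

section FinCons

variable {n : ℕ}

@[simp]
lemma consMeasurableEquiv_apply (p : ℝ × (Fin n → ℝ)) :
    consMeasurableEquiv n p = Fin.cons p.1 p.2 := by
  simp [consMeasurableEquiv, MeasurableEquiv.piFinSuccAbove, Fin.insertNthEquiv,
    Fin.insertNth_zero']

lemma measurePreserving_consMeasurableEquiv (μ : Fin (n + 1) → Measure ℝ)
    [∀ i, SigmaFinite (μ i)] :
    MeasurePreserving (consMeasurableEquiv n) ((μ 0).prod (Measure.pi fun i => μ i.succ))
      (Measure.pi μ) :=
  (measurePreserving_piFinSuccAbove μ 0).symm _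

variable {μ : Fin (n + 1) → Measure ℝ} [∀ i, SigmaFinite (μ i)] {φ : (Fin (n + 1) → ℝ) → ℝ}

lemma MeasureTheory.Integrable.comp_finCons (hφ : Integrable φ (Measure.pi μ)) :
    Integrable (fun p => φ (Fin.cons p.1 p.2)) ((μ 0).prod (Measure.pi fun i => μ i.succ)) := by
  simpa [Function.comp_def] using ((measurePreserving_consMeasurableEquiv μ).integrable_comp_emb
    (consMeasurableEquiv n).measurableEmbedding).2 hφ

lemma integral_eq_integral_integral_cons (hφ : Integrable φ (Measure.pi μ)) :
    ∫ x, φ x ∂Measure.pi μ = ∫ t, ∫ z, φ (Fin.cons t z) ∂Measure.pi (fun i => μ i.succ) ∂μ 0 := by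
  rw [← (measurePreserving_consMeasurableEquiv μ).integral_comp']
  simpa using integral_prod _ hφ.comp_finCons

end FinCons

theorem Monotone.aemeasurable_pi {n : ℕ} {μ : Fin n → Measure ℝ} [∀ i, SigmaFinite (μ i)]
    {f : (Fin n → ℝ) → ℝ} (hf : Monotone f) {C : ℝ} (hC : ∀ x, |f x| ≤ C) :
    AEMeasurable f (Measure.pi μ) := by
  induction n with
  | zero => exact Subsingleton.measurable.aemeasurable
  | succ n ih =>
    rw [← (measurePreserving_consMeasurableEquiv μ).aemeasurable_comp_iff
      (consMeasurableEquiv n).measurableEmbedding]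
    refine aemeasurable_prod_of_monotone_fst (fun p => hC _) (fun z t t' htt' => ?_) fun t => ?_
    · simpa using hf (Fin.cons_le_cons.2 ⟨htt', le_rfl⟩)
    · simpa using ih (fun z z' hzz' => hf (Fin.cons_le_cons.2 ⟨le_rfl, hzz'⟩)) fun z => hC _

theorem Monotone.integrable_pi {n : ℕ} {μ : Fin n → Measure ℝ} [∀ i, IsFiniteMeasure (μ i)]
    {f : (Fin n → ℝ) → ℝ} (hf : Monotone f) {C : ℝ} (hC : ∀ x, |f x| ≤ C) :
    Integrable f (Measure.pi μ) :=
  .of_bound (hf.aemeasurable_pi hC).aestronglyMeasurable C (.of_forall hC)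

lemma Monotone.monotone_integral_cons {n : ℕ} {μ : Fin n → Measure ℝ}
    [∀ i, IsFiniteMeasure (μ i)] {f : (Fin (n + 1) → ℝ) → ℝ} (hf : Monotone f) {C : ℝ}
    (hC : ∀ x, |f x| ≤ C) : Monotone fun t => ∫ z, f (Fin.cons t z) ∂Measure.pi μ := by
  have hsec : ∀ t, Integrable (fun z => f (Fin.cons t z)) (Measure.pi μ) := fun t =>
    Monotone.integrable_pi (fun z z' hzz' => hf (Fin.cons_le_cons.2 ⟨le_rfl, hzz'⟩)) fun z => hC _
  exact fun t t' htt' =>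
    integral_mono (hsec t) (hsec t') fun z => hf (Fin.cons_le_cons.2 ⟨htt', le_rfl⟩)

lemma abs_integral_le_of_abs_le {α : Type*} [MeasurableSpace α] {μ : Measure α}
    [IsProbabilityMeasure μ] {f : α → ℝ} {C : ℝ} (hC : ∀ x, |f x| ≤ C) : |∫ x, f x ∂μ| ≤ C := by
  simpa using norm_integral_le_of_norm_le_const (μ := μ) (f := f) (.of_forall hC)

theorem Monotone.integral_mul_integral_le_integral_mul {ν : Measure ℝ} [IsProbabilityMeasure ν]
    {F G : ℝ → ℝ} (hF : Monotone F) (hG : Monotone G) {C : ℝ} (hFC : ∀ x, |F x| ≤ C)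
    (hGC : ∀ x, |G x| ≤ C) : (∫ x, F x ∂ν) * (∫ x, G x ∂ν) ≤ ∫ x, F x * G x ∂ν := by
  have hFi : Integrable F ν := .of_bound hF.measurable.aestronglyMeasurable C (.of_forall hFC)
  have hGi : Integrable G ν := .of_bound hG.measurable.aestronglyMeasurable C (.of_forall hGC)
  have hFGi : Integrable (fun x => F x * G x) ν :=
    hFi.mul_bdd hG.measurable.aestronglyMeasurable (.of_forall hGC)
  have hsign : ∀ p : ℝ × ℝ, 0 ≤ (F p.1 - F p.2) * (G p.1 - G p.2) := fun p => by
    rcases le_total p.1 p.2 with h | h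
    · exact mul_nonneg_of_nonpos_of_nonpos (sub_nonpos.2 (hF h)) (sub_nonpos.2 (hG h))
    · exact mul_nonneg (sub_nonneg.2 (hF h)) (sub_nonneg.2 (hG h))
  have hexpand : ∫ p, (F p.1 - F p.2) * (G p.1 - G p.2) ∂ν.prod ν =
      2 * ((∫ x, F x * G x ∂ν) - (∫ x, F x ∂ν) * (∫ x, G x ∂ν)) := by
    have h1 := hFGi.comp_fst ν
    have h2 := hFGi.comp_snd ν
    have h3 := hFi.mul_prod hGi
    have h4 := hGi.mul_prod hFi
    calc ∫ p, (F p.1 - F p.2) * (G p.1 - G p.2) ∂ν.prod ν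
        = ∫ p, (F p.1 * G p.1 + F p.2 * G p.2) - (F p.1 * G p.2 + G p.1 * F p.2) ∂ν.prod ν :=
          integral_congr_ae (.of_forall fun p => by ring)
      _ = _ := by
        rw [integral_sub (by exact h1.add h2) (by exact h3.add h4), integral_add h1 h2,
          integral_add h3 h4, integral_fun_fst (fun x => F x * G x),
          integral_fun_snd (fun x => F x * G x), integral_prod_mul, integral_prod_mul]
        simp only [probReal_univ, one_smul]; ring
  linarith [integral_nonneg (μ := ν.prod ν)
    (f := fun p : ℝ × ℝ => (F p.1 - F p.2) * (G p.1 - G p.2)) hsign]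

theorem Monotone.integral_mul_integral_le_integral_mul_pi {n : ℕ} {μ : Fin n → Measure ℝ}
    [∀ i, IsProbabilityMeasure (μ i)] {f g : (Fin n → ℝ) → ℝ} (hf : Monotone f) (hg : Monotone g)
    {C : ℝ} (hfC : ∀ x, |f x| ≤ C) (hgC : ∀ x, |g x| ≤ C) :
    (∫ x, f x ∂Measure.pi μ) * (∫ x, g x ∂Measure.pi μ) ≤ ∫ x, f x * g x ∂Measure.pi μ := by
  induction n with
  | zero => simp [integral_unique]
  | succ n ih =>
    have hfi := hf.integrable_pi (μ := μ) hfC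
    have hgi := hg.integrable_pi (μ := μ) hgC
    have hfgi := hfi.mul_bdd (hg.aemeasurable_pi hgC).aestronglyMeasurable (.of_forall hgC)
    set F := fun t => ∫ z, f (Fin.cons t z) ∂Measure.pi fun i => μ i.succ
    set G := fun t => ∫ z, g (Fin.cons t z) ∂Measure.pi fun i => μ i.succ
    have hFC : ∀ t, |F t| ≤ C := fun t => abs_integral_le_of_abs_le fun z => hfC _
    have hGC : ∀ t, |G t| ≤ C := fun t => abs_integral_le_of_abs_le fun z => hgC _
    have hFG : Integrable (fun t => F t * G t) (μ 0) :=
      (Integrable.of_bound (hf.monotone_integral_cons hfC).measurable.aestronglyMeasurable C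
        (.of_forall hFC)).mul_bdd (hg.monotone_integral_cons hgC).measurable.aestronglyMeasurable
        (.of_forall hGC)
    calc (∫ x, f x ∂Measure.pi μ) * (∫ x, g x ∂Measure.pi μ)
        = (∫ t, F t ∂μ 0) * (∫ t, G t ∂μ 0) := by
          rw [integral_eq_integral_integral_cons hfi, integral_eq_integral_integral_cons hgi]
      _ ≤ ∫ t, F t * G t ∂μ 0 :=
          (hf.monotone_integral_cons hfC).integral_mul_integral_le_integral_mul
            (hg.monotone_integral_cons hgC) hFC hGC
      _ ≤ ∫ t, ∫ z, f (Fin.cons t z) * g (Fin.cons t z) ∂Measure.pi fun i => μ i.succ ∂μ 0 :=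
          integral_mono hFG hfgi.comp_finCons.integral_prod_left fun t =>
            ih (fun z z' hzz' => hf (Fin.cons_le_cons.2 ⟨le_rfl, hzz'⟩))
              (fun z z' hzz' => hg (Fin.cons_le_cons.2 ⟨le_rfl, hzz'⟩))
              (fun z => hfC _) fun z => hgC _
      _ = ∫ x, f x * g x ∂Measure.pi μ := (integral_eq_integral_integral_cons hfgi).symm

theorem ProbabilityTheory.iIndepFun.integral_mul_le_of_monotone_of_antitone {Ω : Type*}
    [MeasurableSpace Ω] {P : Measure Ω} [IsProbabilityMeasure P] {n : ℕ} {X : Fin n → Ω → ℝ}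
    (hX : ∀ i, Measurable (X i)) (hindep : iIndepFun X P) {f g : (Fin n → ℝ) → ℝ}
    (hf : Monotone f) (hg : Antitone g) {C : ℝ} (hfC : ∀ x, |f x| ≤ C) (hgC : ∀ x, |g x| ≤ C) :
    ∫ ω, f (fun i => X i ω) * g (fun i => X i ω) ∂P ≤
      (∫ ω, f (fun i => X i ω) ∂P) * ∫ ω, g (fun i => X i ω) ∂P := by
  set μ := fun i => P.map (X i)
  have : ∀ i, IsProbabilityMeasure (μ i) := fun i =>
    Measure.isProbabilityMeasure_map (hX i).aemeasurable
  have hlaw : P.map (fun ω i => X i ω) = Measure.pi μ :=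
    hindep.map_fun_eq_pi_map fun i => (hX i).aemeasurable
  have hintegral : ∀ φ : (Fin n → ℝ) → ℝ, AEStronglyMeasurable φ (Measure.pi μ) →
      ∫ ω, φ (fun i => X i ω) ∂P = ∫ x, φ x ∂Measure.pi μ := fun φ hφ => by
    rw [← hlaw, integral_map (measurable_pi_lambda _ hX).aemeasurable (hlaw ▸ hφ)]
  have hgC' : ∀ x, |(-g) x| ≤ C := fun x => by simpa using hgC x
  have hfm := hf.aemeasurable_pi (μ := μ) hfC
  have hgm : AEMeasurable g (Measure.pi μ) :=
    aemeasurable_neg_iff.1 (hg.neg.aemeasurable_pi hgC')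
  have key := hf.integral_mul_integral_le_integral_mul_pi (μ := μ) hg.neg hfC hgC'
  simp only [mul_neg, integral_neg] at key
  rw [hintegral (fun x => f x * g x) (hfm.mul hgm).aestronglyMeasurable,
    hintegral _ hfm.aestronglyMeasurable, hintegral _ hgm.aestronglyMeasurable]
  linarith

noncomputable def clip (k a : ℝ) : ℝ := max (-k) (min a k)

lemma monotone_clip (k : ℝ) : Monotone (clip k) := fun _ _ h =>
  max_le_max le_rfl (min_le_min h le_rfl)

lemma continuous_clip (k : ℝ) : Continuous (clip k) := by unfold clip; fun_prop

lemma abs_clip_le {k : ℝ} (hk : 0 ≤ k) (a : ℝ) : |clip k a| ≤ k :=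
  abs_le.2 ⟨le_max_left _ _, max_le (by linarith) (min_le_right _ _)⟩

lemma abs_clip_le_abs {k : ℝ} (hk : 0 ≤ k) (a : ℝ) : |clip k a| ≤ |a| := by
  unfold clip
  grind [abs_le, abs_nonneg, le_abs_self, neg_abs_le]

lemma tendsto_clip (a : ℝ) : Tendsto (fun k : ℕ => clip k a) atTop (𝓝 a) := by
  refine tendsto_const_nhds.congr' ((eventually_ge_atTop ⌈|a|⌉₊).mono fun k hk => ?_)
  have hak : |a| ≤ k := (Nat.le_ceil _).trans (Nat.cast_le.2 hk)
  symm
  dsimp only [clip]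
  rw [min_eq_left (le_abs_self a |>.trans hak), max_eq_right (by linarith [neg_abs_le a])]

lemma tendsto_integral_of_abs_le {α : Type*} [MeasurableSpace α] {μ : Measure α}
    {u : ℕ → α → ℝ} {v : α → ℝ} (hv : Integrable v μ) (hu : ∀ k, AEStronglyMeasurable (u k) μ)
    (hle : ∀ k x, |u k x| ≤ |v x|) (hlim : ∀ x, Tendsto (fun k => u k x) atTop (𝓝 (v x))) :
    Tendsto (fun k => ∫ x, u k x ∂μ) atTop (𝓝 (∫ x, v x ∂μ)) :=
  tendsto_integral_of_dominated_convergence (fun x => |v x|) hu hv.abs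
    (fun k => .of_forall (hle k)) (.of_forall hlim)

/-- Harris' negative association inequality. -/
theorem stmt_7
    (Ω : Type*) [MeasurableSpace Ω] (P : Measure Ω) [IsProbabilityMeasure P]
    (n : ℕ) (X : Fin n → Ω → ℝ) (hmeas : ∀ i, Measurable (X i))
    (hindep : iIndepFun X P)
    (f g : (Fin n → ℝ) → ℝ)
    (hf : Monotone f) (hg : Antitone g)
    (hfint : Integrable (fun ω => f (fun i => X i ω)) P)
    (hgint : Integrable (fun ω => g (fun i => X i ω)) P)
    (hfgint : Integrable (fun ω => f (fun i => X i ω) * g (fun i => X i ω)) P) :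
    (∫ ω, f (fun i => X i ω) * g (fun i => X i ω) ∂P) ≤
      (∫ ω, f (fun i => X i ω) ∂P) * ∫ ω, g (fun i => X i ω) ∂P := by
  have hk : ∀ k : ℕ, (0 : ℝ) ≤ k := fun k => Nat.cast_nonneg k
  have hclipped : ∀ k : ℕ,
      ∫ ω, clip k (f (fun i => X i ω)) * clip k (g (fun i => X i ω)) ∂P ≤
        (∫ ω, clip k (f (fun i => X i ω)) ∂P) * ∫ ω, clip k (g (fun i => X i ω)) ∂P :=
    fun k => hindep.integral_mul_le_of_monotone_of_antitone hmeas ((monotone_clip k).comp hf)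
      ((monotone_clip k).comp_antitone hg) (fun x => abs_clip_le (hk k) _)
      fun x => abs_clip_le (hk k) _
  have hfk := fun k : ℕ => (continuous_clip k).comp_aestronglyMeasurable hfint.1
  have hgk := fun k : ℕ => (continuous_clip k).comp_aestronglyMeasurable hgint.1
  have hF := tendsto_integral_of_abs_le hfint hfk (fun k ω => abs_clip_le_abs (hk k) _)
    fun ω => tendsto_clip _
  have hG := tendsto_integral_of_abs_le hgint hgk (fun k ω => abs_clip_le_abs (hk k) _)
    fun ω => tendsto_clip _
  have hFG := tendsto_integral_of_abs_le hfgint (fun k => (hfk k).mul (hgk k))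
    (fun k ω => by
      simp only [Pi.mul_apply, abs_mul]
      exact mul_le_mul (abs_clip_le_abs (hk k) _) (abs_clip_le_abs (hk k) _) (abs_nonneg _)
        (abs_nonneg _))
    fun ω => (tendsto_clip _).mul (tendsto_clip _)
  exact le_of_tendsto_of_tendsto' hFG (hF.mul hG) hclipped
end

section
/- Let α > 1, V(x) = |x|^α/α, and let μ be the probability measure on ℝ with density e^{−V(x)}/Z, where Z = ∫ e^{−V} dx. Let ν be the symmetric exponential measure on ℝ with density (1/2)e^{−|x|}, and let t be the monotone rearrangement pushing ν forward to μ. Then there is a constant C_α > 0, depending only on α, such that for every x ∈ ℝ, | t'( t⁻¹(x) ) | ≤ C_α / ( V'(|x|) + 1 ) = C_α / ( |x|^{α−1} + 1 ). -/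
/-!
Write `g`, `p` for the densities of `ν`, `μ` and `G`, `H` for their distribution functions.
Differentiating `G = H ∘ t` gives `p (t s) * t' s = g s`. The Laplace density satisfies
`g s ≤ min (G s) (1 - G s)`, and for `x = t s` these two tails equal `H x` and `1 - H x`,
so by the symmetry of `μ` we get `g s ≤ μ (|x|, ∞)`. Hence `t' (t⁻¹ x)` is at most the
Mills ratio `∫_{|x|}^∞ e^{-V} / e^{-V(x)}`, which is `O(1 / (V'(|x|) + 1))`: for
`u ≥ y ≥ 1`, `e^{-V(u)} ≤ V'(u) e^{-V(u)} / V'(y)`, whose integral over `(y, ∞)` is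
`e^{-V(y)} / V'(y)`.
-/

open MeasureTheory Set Filter Topology Real

section MapWithDensity

variable {X Y : Type*} [MeasurableSpace X] [MeasurableSpace Y] {m : Measure X} {n : Measure Y}

theorem setIntegral_eq_setIntegral_preimage_of_map_withDensity {f : Y → ℝ} {g : X → ℝ}
    {t : X → Y} (hf : 0 ≤ f) (hg : 0 ≤ g) (hfi : Integrable f n) (hgi : Integrable g m)
    (ht : Measurable t)
    (hmap : (m.withDensity fun x => ENNReal.ofReal (g x)).map t =
      n.withDensity fun y => ENNReal.ofReal (f y))
    {A : Set Y} (hA : MeasurableSet A) :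
    ∫ y in A, f y ∂n = ∫ x in t ⁻¹' A, g x ∂m := by
  have h := congrArg (· A) hmap
  simp only [Measure.map_apply ht hA, withDensity_apply _ hA, withDensity_apply _ (ht hA)] at h
  rw [← ofReal_integral_eq_lintegral_ofReal hfi.integrableOn (ae_of_all _ hf),
    ← ofReal_integral_eq_lintegral_ofReal hgi.integrableOn (ae_of_all _ hg)] at h
  exact ((ENNReal.ofReal_eq_ofReal_iff (integral_nonneg hg) (integral_nonneg hf)).mp h).symm

end MapWithDensity

theorem hasDerivAt_integral_Iic {E : Type*} [NormedAddCommGroup E] [NormedSpace ℝ E]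
    [CompleteSpace E] {f : ℝ → E} {x : ℝ} (hf : Integrable f) (hfx : ContinuousAt f x) :
    HasDerivAt (fun y => ∫ u in Iic y, f u) (f x) x := by
  have hsplit : ∀ y, ∫ u in Iic y, f u = (∫ u in Iic 0, f u) + ∫ u in (0 : ℝ)..y, f u :=
    fun y => by
      rw [← intervalIntegral.integral_Iic_sub_Iic hf.integrableOn hf.integrableOn]
      abel
  rw [funext hsplit]
  exact (intervalIntegral.integral_hasDerivAt_right hf.intervalIntegrable
    hf.aestronglyMeasurable.stronglyMeasurableAtFilter hfx).const_add _

theorem mul_deriv_eq_of_integral_Iic_comp_eq {f g t : ℝ → ℝ} {t' s : ℝ} (hfi : Integrable f)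
    (hgi : Integrable g) (hfc : ContinuousAt f (t s)) (hgc : ContinuousAt g s)
    (hcdf : ∀ s, ∫ u in Iic (t s), f u = ∫ u in Iic s, g u) (ht : HasDerivAt t t' s) :
    f (t s) * t' = g s :=
  ((hasDerivAt_integral_Iic hfi hfc).comp s ht).unique <| by
    simpa only [Function.comp_def, hcdf] using hasDerivAt_integral_Iic hgi hgc

section EvenFunctions

variable {f : ℝ → ℝ}

theorem Continuous.integrable_of_even (hc : Continuous f) (he : ∀ x, f (-x) = f x)
    (hi : IntegrableOn f (Ioi 0)) : Integrable f :=
  hc.locallyIntegrable.integrable_of_isBigO_atTop_of_norm_isNegInvariant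
    (ae_of_all _ fun x => by simp [he]) (Asymptotics.isBigO_refl f _)
    ⟨Ioi 0, Ioi_mem_atTop 0, hi⟩

theorem integral_Iic_eq_integral_Ioi_neg_of_even (he : ∀ x, f (-x) = f x) (s : ℝ) :
    ∫ x in Iic s, f x = ∫ x in Ioi (-s), f x := by
  simpa only [he] using integral_comp_neg_Iic s f

end EvenFunctions

section Laplace

theorem integrable_exp_neg_abs : Integrable fun x : ℝ => exp (-|x|) :=
  (by fun_prop : Continuous fun x : ℝ => exp (-|x|)).integrable_of_even
    (fun x => by rw [abs_neg]) <|
    (integrableOn_exp_neg_Ioi 0).congr_fun (fun x hx => by rw [abs_of_pos hx]) measurableSet_Ioi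

theorem integral_Ioi_exp_neg_abs {s : ℝ} (hs : 0 ≤ s) :
    ∫ u in Ioi s, exp (-|u|) = exp (-s) := by
  rw [← integral_exp_neg_Ioi]
  exact setIntegral_congr_fun measurableSet_Ioi fun u hu => by rw [abs_of_pos (hs.trans_lt hu)]

theorem exp_neg_abs_le_integral_Ioi (s : ℝ) : exp (-|s|) ≤ ∫ u in Ioi s, exp (-|u|) := by
  rcases le_total 0 s with hs | hs
  · rw [integral_Ioi_exp_neg_abs hs, abs_of_nonneg hs]
  · calc exp (-|s|) ≤ ∫ u in Ioi 0, exp (-|u|) := by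
          rw [integral_Ioi_exp_neg_abs le_rfl, neg_zero, exp_zero, exp_le_one_iff, neg_nonpos]
          exact abs_nonneg s
      _ ≤ ∫ u in Ioi s, exp (-|u|) :=
          setIntegral_mono_set integrable_exp_neg_abs.integrableOn
            (ae_of_all _ fun u => (exp_pos _).le) (Ioi_subset_Ioi hs).eventuallyLE

theorem exp_neg_abs_le_integral_Iic (s : ℝ) : exp (-|s|) ≤ ∫ u in Iic s, exp (-|u|) := by
  rw [integral_Iic_eq_integral_Ioi_neg_of_even (fun x => by rw [abs_neg]), ← abs_neg]
  exact exp_neg_abs_le_integral_Ioi (-s)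

end Laplace

section Potential

variable {α : ℝ}

theorem integrableOn_Ioi_rpow_mul_exp_neg_rpow_div {s y : ℝ} (hs : -1 < s) (hα : 0 < α)
    (hy : 0 ≤ y) : IntegrableOn (fun u => u ^ s * exp (-(u ^ α / α))) (Ioi y) :=
  ((integrableOn_rpow_mul_exp_neg_mul_rpow hs hα (inv_pos.mpr hα)).mono_set
    (Ioi_subset_Ioi hy)).congr_fun (fun u _ => by ring_nf) measurableSet_Ioi

theorem integrableOn_Ioi_exp_neg_rpow_div {y : ℝ} (hα : 0 < α) (hy : 0 ≤ y) :
    IntegrableOn (fun u => exp (-(u ^ α / α))) (Ioi y) := by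
  simpa only [rpow_zero, one_mul] using
    integrableOn_Ioi_rpow_mul_exp_neg_rpow_div (s := 0) (by norm_num) hα hy

theorem integrable_exp_neg_abs_rpow_div (hα : 0 < α) :
    Integrable fun x : ℝ => exp (-(|x| ^ α / α)) :=
  (by fun_prop (disch := positivity) : Continuous fun x : ℝ => exp (-(|x| ^ α / α)))
    |>.integrable_of_even (fun x => by rw [abs_neg]) <|
    (integrableOn_Ioi_exp_neg_rpow_div hα le_rfl).congr_fun
      (fun x hx => by rw [abs_of_pos hx]) measurableSet_Ioi

theorem integral_Ioi_rpow_sub_one_mul_exp_neg_rpow_div {y : ℝ} (hα : 0 < α) (hy : 0 < y) :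
    ∫ u in Ioi y, u ^ (α - 1) * exp (-(u ^ α / α)) = exp (-(y ^ α / α)) := by
  have hderiv : ∀ u ∈ Ici y, HasDerivAt (fun u => -exp (-(u ^ α / α)))
      (u ^ (α - 1) * exp (-(u ^ α / α))) u := fun u hu => by
    refine ((hasDerivAt_rpow_const (p := α) (Or.inl (hy.trans_le hu).ne')).div_const α
      |>.fun_neg.exp.fun_neg).congr_deriv ?_
    field_simp
  have hlim : Tendsto (fun u => -exp (-(u ^ α / α))) atTop (𝓝 (-0)) :=
    (tendsto_exp_neg_atTop_nhds_zero.comp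
      ((tendsto_rpow_atTop hα).atTop_div_const hα)).neg
  rw [integral_Ioi_of_hasDerivAt_of_tendsto' hderiv
    (integrableOn_Ioi_rpow_mul_exp_neg_rpow_div (by linarith) hα hy.le) hlim]
  ring

theorem rpow_sub_one_mul_integral_Ioi_exp_neg_rpow_div_le {y : ℝ} (hα : 1 ≤ α) (hy : 0 < y) :
    y ^ (α - 1) * ∫ u in Ioi y, exp (-(u ^ α / α)) ≤ exp (-(y ^ α / α)) := by
  have hα0 : 0 < α := by linarith
  rw [← integral_const_mul, ← integral_Ioi_rpow_sub_one_mul_exp_neg_rpow_div hα0 hy]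
  refine setIntegral_mono_on ((integrableOn_Ioi_exp_neg_rpow_div hα0 hy.le).const_mul _)
    (integrableOn_Ioi_rpow_mul_exp_neg_rpow_div (by linarith) hα0 hy.le)
    measurableSet_Ioi fun u hu => ?_
  gcongr
  exact hu.le

theorem exists_pos_mul_integral_Ioi_exp_neg_abs_rpow_div_le (hα : 1 ≤ α) :
    ∃ C > 0, ∀ x : ℝ, (|x| ^ (α - 1) + 1) * ∫ u in Ioi |x|, exp (-(|u| ^ α / α)) ≤
      C * exp (-(|x| ^ α / α)) := by
  have hα0 : 0 < α := by linarith
  set I := ∫ u in Ioi 0, exp (-(u ^ α / α))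
  have hI : 0 ≤ I := integral_nonneg fun u => (exp_pos _).le
  refine ⟨2 * (1 + I * exp α⁻¹), by positivity, fun x => ?_⟩
  set y := |x|
  have hy : 0 ≤ y := abs_nonneg x
  have habs : ∫ u in Ioi y, exp (-(|u| ^ α / α)) = ∫ u in Ioi y, exp (-(u ^ α / α)) :=
    setIntegral_congr_fun measurableSet_Ioi fun u hu => by rw [abs_of_pos (hy.trans_lt hu)]
  rw [habs]
  set J := ∫ u in Ioi y, exp (-(u ^ α / α))
  have hJ : 0 ≤ J := integral_nonneg fun u => (exp_pos _).le
  have hE : 0 < exp (-(y ^ α / α)) := exp_pos _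
  rcases le_total 1 y with h1 | h1
  · have hJle : y ^ (α - 1) * J ≤ exp (-(y ^ α / α)) :=
      rpow_sub_one_mul_integral_Ioi_exp_neg_rpow_div_le hα (by linarith)
    have hyα : 1 ≤ y ^ (α - 1) := one_le_rpow h1 (by linarith)
    nlinarith [mul_nonneg hI (exp_pos α⁻¹).le]
  · have hJI : J ≤ I := setIntegral_mono_set (integrableOn_Ioi_exp_neg_rpow_div hα0 le_rfl)
      (ae_of_all _ fun u => (exp_pos _).le) (Ioi_subset_Ioi hy).eventuallyLE
    have hyα : y ^ (α - 1) ≤ 1 := rpow_le_one hy h1 (by linarith)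
    have hexp : 1 ≤ exp α⁻¹ * exp (-(y ^ α / α)) := by
      rw [← exp_add, one_le_exp_iff, inv_eq_one_div, ← sub_eq_add_neg, ← sub_div]
      exact div_nonneg (sub_nonneg.mpr (rpow_le_one hy h1 hα0.le)) hα0.le
    nlinarith [mul_le_mul_of_nonneg_left hexp hI]

end Potential

section Rearrangement

theorem StrictMono.preimage_Iic_apply {β γ : Type*} [LinearOrder β] [Preorder γ] {t : β → γ}
    (ht : StrictMono t) (s : β) : t ⁻¹' Iic (t s) = Iic s :=
  ext fun _ => ht.le_iff_le

theorem StrictMono.preimage_Ioi_apply {β γ : Type*} [LinearOrder β] [Preorder γ] {t : β → γ}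
    (ht : StrictMono t) (s : β) : t ⁻¹' Ioi (t s) = Ioi s :=
  ext fun _ => ht.lt_iff_lt

variable {f g t : ℝ → ℝ}

theorem mul_deriv_eq_of_map_withDensity {t' s : ℝ} (hf : 0 ≤ f) (hg : 0 ≤ g)
    (hfi : Integrable f) (hgi : Integrable g) (hfc : ContinuousAt f (t s))
    (hgc : ContinuousAt g s) (ht : StrictMono t)
    (hmap : (volume.withDensity fun x => ENNReal.ofReal (g x)).map t =
      volume.withDensity fun y => ENNReal.ofReal (f y))
    (hderiv : HasDerivAt t t' s) :
    f (t s) * t' = g s := by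
  refine mul_deriv_eq_of_integral_Iic_comp_eq hfi hgi hfc hgc (fun s => ?_) hderiv
  rw [setIntegral_eq_setIntegral_preimage_of_map_withDensity hf hg hfi hgi ht.monotone.measurable
    hmap measurableSet_Iic, ht.preimage_Iic_apply s]

theorem half_exp_neg_abs_le_integral_Ioi_abs_of_map_withDensity (hf : 0 ≤ f)
    (hfi : Integrable f) (hfe : ∀ x, f (-x) = f x) (ht : StrictMono t)
    (hmap : (volume.withDensity fun x => ENNReal.ofReal (1 / 2 * exp (-|x|))).map t =
      volume.withDensity fun y => ENNReal.ofReal (f y))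
    (s : ℝ) :
    1 / 2 * exp (-|s|) ≤ ∫ u in Ioi |t s|, f u := by
  have hmass : ∀ A, MeasurableSet A →
      ∫ y in A, f y = ∫ x in t ⁻¹' A, 1 / 2 * exp (-|x|) :=
    fun _ hA => setIntegral_eq_setIntegral_preimage_of_map_withDensity hf (fun x => by positivity)
      hfi (integrable_exp_neg_abs.const_mul _) ht.monotone.measurable hmap hA
  rcases le_total 0 (t s) with h | h
  · rw [abs_of_nonneg h, hmass _ measurableSet_Ioi,
      ht.preimage_Ioi_apply s, integral_const_mul]
    exact mul_le_mul_of_nonneg_left (exp_neg_abs_le_integral_Ioi s) (by norm_num)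
  · rw [abs_of_nonpos h, ← integral_Iic_eq_integral_Ioi_neg_of_even hfe,
      hmass _ measurableSet_Iic, ht.preimage_Iic_apply s, integral_const_mul]
    exact mul_le_mul_of_nonneg_left (exp_neg_abs_le_integral_Iic s) (by norm_num)

end Rearrangement

/-- Lemma 3.3: bound on the derivative of the monotone rearrangement sending the
symmetric exponential measure onto `dμ = Z⁻¹e^{−|x|^α/α}dx`, `α > 1`. -/
theorem stmt_13
    (α : ℝ) (hα : 1 < α)
    (Z : ℝ) (hZ : Z = ∫ x : ℝ, Real.exp (-(|x| ^ α / α)))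
    (μ ν : Measure ℝ)
    (hμd : μ = volume.withDensity fun x => ENNReal.ofReal (Real.exp (-(|x| ^ α / α)) / Z))
    (hνd : ν = volume.withDensity fun x => ENNReal.ofReal (1 / 2 * Real.exp (-|x|)))
    (t t' tinv : ℝ → ℝ) (htmono : Monotone t)
    (htmap : Measure.map t ν = μ)
    (hderiv : ∀ x, HasDerivAt t (t' x) x)
    (hlinv : Function.LeftInverse tinv t) (hrinv : Function.RightInverse tinv t) :
    ∃ Cα : ℝ, 0 < Cα ∧
      ∀ x : ℝ, |t' (tinv x)| ≤ Cα / (|x| ^ (α - 1) + 1) := by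
  subst hμd hνd
  set p : ℝ → ℝ := fun x => exp (-(|x| ^ α / α)) / Z
  have hZ_pos : 0 < Z := hZ ▸ integral_exp_pos (integrable_exp_neg_abs_rpow_div (by linarith))
  have hp_pos : ∀ x, 0 < p x := fun x => div_pos (exp_pos _) hZ_pos
  have hp_int : Integrable p := (integrable_exp_neg_abs_rpow_div (by linarith)).div_const Z
  have ht : StrictMono t := htmono.strictMono_of_injective hlinv.injective
  obtain ⟨C, hC_pos, hC⟩ := exists_pos_mul_integral_Ioi_exp_neg_abs_rpow_div_le hα.le
  refine ⟨C, hC_pos, fun x => ?_⟩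
  obtain ⟨s, rfl⟩ := hrinv.surjective x
  rw [hlinv s]
  have hslope : p (t s) * t' s = 1 / 2 * exp (-|s|) :=
    mul_deriv_eq_of_map_withDensity (fun x => (hp_pos x).le) (fun x => by positivity) hp_int
      (integrable_exp_neg_abs.const_mul _) (by fun_prop (disch := positivity)) (by fun_prop) ht
      htmap (hderiv s)
  have hmass : 1 / 2 * exp (-|s|) ≤ ∫ u in Ioi |t s|, p u :=
    half_exp_neg_abs_le_integral_Ioi_abs_of_map_withDensity (fun x => (hp_pos x).le) hp_int
      (by simp [p]) ht htmap s
  have htail : (|t s| ^ (α - 1) + 1) * ∫ u in Ioi |t s|, p u ≤ C * p (t s) := by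
    simp only [p, integral_div, mul_div_assoc']
    exact div_le_div_of_nonneg_right (hC (t s)) hZ_pos.le
  have ht'_nonneg : 0 ≤ t' s := nonneg_of_mul_nonneg_right (by rw [hslope]; positivity) (hp_pos _)
  rw [abs_of_nonneg ht'_nonneg, le_div_iff₀ (by positivity)]
  refine le_of_mul_le_mul_left ?_ (hp_pos (t s))
  calc p (t s) * (t' s * (|t s| ^ (α - 1) + 1))
      = 1 / 2 * exp (-|s|) * (|t s| ^ (α - 1) + 1) := by rw [← hslope, mul_assoc]
    _ ≤ (∫ u in Ioi |t s|, p u) * (|t s| ^ (α - 1) + 1) := by gcongr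
    _ ≤ p (t s) * C := by linarith
end
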